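/- Let $(Z^k)_{k \in \mathbb{N}}$ be a sequence of nonnegative supermartingales on the time interval $[0,T]$ (with $T$ a finite stopping time) with $Z^k_0 = 1$ for all $k$, and suppose $Z^k_T \to 1$ in probability as $k \to \infty$. Then $\sup_{t \in [0,T]} |Z^k_t - 1| \to 0$ in probability as $k \to \infty$. -/

import Mathlib

open MeasureTheory Filter Set
open scoped Topology ENNReal

noncomputable section

/-- Uniform convergence on compact time intervals, in probability (ucp). -/
def UcpTendsto {Ω ι : Type*} [MeasurableSpace Ω] (μ : Measure Ω) (l : Filter ι)
    (F : ι → ℝ → Ω → ℝ) (G : ℝ → Ω → ℝ) : Prop :=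
  ∀ T : ℝ, TendstoInMeasure μ
    (fun n ω => ⨆ t ∈ Icc (0 : ℝ) T, |F n t ω - G t ω|) l (fun _ => (0 : ℝ))

/-- All paths are right-continuous. -/
def RightCont {Ω : Type*} (X : ℝ → Ω → ℝ) : Prop :=
  ∀ ω t, ContinuousWithinAt (fun s => X s ω) (Ici t) t

/-- `Xm` is the process of left limits of `X`. -/
def HasLeftLimits {Ω : Type*} (X Xm : ℝ → Ω → ℝ) : Prop :=
  ∀ ω t, Tendsto (fun s => X s ω) (𝓝[<] t) (𝓝 (Xm t ω))

/-- Local martingale: there is a localizing sequence of stopping times. -/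
def IsLocalMartingale {Ω : Type*} {m0 : MeasurableSpace Ω} (ℱ : Filtration ℝ m0)
    (μ : Measure Ω) (M : ℝ → Ω → ℝ) : Prop :=
  ∃ τ : ℕ → Ω → ℝ, (∀ n, IsStoppingTime ℱ (fun ω => (τ n ω : WithTop ℝ))) ∧
    (∀ ω, Tendsto (fun n => τ n ω) atTop atTop) ∧
    ∀ n, Martingale (fun t ω => M (min t (τ n ω)) ω) ℱ μ

/-- Semimartingale: adapted càdlàg process that is the sum of a local martingale and an
adapted process of finite variation on compacts. -/
def IsSemimartingale {Ω : Type*} {m0 : MeasurableSpace Ω} (ℱ : Filtration ℝ m0)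
    (μ : Measure Ω) (X : ℝ → Ω → ℝ) : Prop :=
  Adapted ℱ X ∧ RightCont X ∧ (∃ Xm, HasLeftLimits X Xm) ∧
    ∃ M A : ℝ → Ω → ℝ, IsLocalMartingale ℱ μ M ∧
      (∀ ω a b, BoundedVariationOn (fun s => A s ω) (Icc a b)) ∧
      ∀ t ω, X t ω = X 0 ω + M t ω + A t ω

/-- Discrete quadratic-variation sums along the dyadic partition of mesh `2⁻ⁿ` of `[0, n]`,
stopped at time `t`. -/
def qvApprox {Ω : Type*} (X : ℝ → Ω → ℝ) (n : ℕ) (t : ℝ) (ω : Ω) : ℝ :=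
  ∑ j ∈ Finset.range (n * 2 ^ n),
    (X (min (((j : ℝ) + 1) / 2 ^ n) t) ω - X (min ((j : ℝ) / 2 ^ n) t) ω) ^ 2

/-- `Q` is (a version of) the quadratic variation `[X, X]` (without the initial square). -/
def IsQuadVar {Ω : Type*} [MeasurableSpace Ω] (μ : Measure Ω) (X Q : ℝ → Ω → ℝ) : Prop :=
  UcpTendsto μ atTop (fun n => qvApprox X n) Q

/-- Riemann sums of the (right limit of the) integrand `ηp` against `S` along dyadic
partitions, stopped at `t`. -/
def riemannApprox {Ω : Type*} (ηp S : ℝ → Ω → ℝ) (n : ℕ) (t : ℝ) (ω : Ω) : ℝ :=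
  ∑ j ∈ Finset.range (n * 2 ^ n),
    ηp ((j : ℝ) / 2 ^ n) ω *
      (S (min (((j : ℝ) + 1) / 2 ^ n) t) ω - S (min ((j : ℝ) / 2 ^ n) t) ω)

/-- `I` is (a version of) the Itô stochastic integral `∫₀· η dS`, characterized as the ucp
limit of Riemann sums along deterministic dyadic partitions; here `ηp` is the process of
right limits of the càglàd integrand `η`. -/
def IsStochInt {Ω : Type*} [MeasurableSpace Ω] (μ : Measure Ω) (ηp S I : ℝ → Ω → ℝ) : Prop :=
  UcpTendsto μ atTop (fun n => riemannApprox ηp S n) I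

/-- Sum of `g` over the (at most countably many nontrivial) times in `(0, t]`. -/
def jumpSum {Ω : Type*} (g : ℝ → Ω → ℝ) (t : ℝ) (ω : Ω) : ℝ :=
  ∑' s : Ioc (0 : ℝ) t, g (s : ℝ) ω

/-- The Doléans-Dade stochastic exponential of a semimartingale `Y` (with `Y₀ = 0`,
left limits `Ym` and quadratic variation `Q`), expressed through the closed-form formula
`ℰ(Y) = exp(Y - ½[Y,Y]ᶜ - Σ_{s≤·} (ΔY_s - log(1+ΔY_s)))`, valid when `ΔY > -1`. -/
def stochExp {Ω : Type*} (Y Ym Q : ℝ → Ω → ℝ) (t : ℝ) (ω : Ω) : ℝ :=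
  Real.exp (Y t ω
    - (1 / 2) * (Q t ω - jumpSum (fun s ω' => (Y s ω' - Ym s ω') ^ 2) t ω)
    - jumpSum (fun s ω' => (Y s ω' - Ym s ω') - Real.log (1 + (Y s ω' - Ym s ω'))) t ω)

end

/-! Put `F = 1 - Z^T`, a submartingale with `F₀ = 0` and `F ≤ 1`. In discrete time, stop `F` at
the first time `τ ≤ n` with `|F| ≥ δ`. Since `|x| = 2x⁺ - x`, optional stopping for `F` and for the
submartingale `F⁺` gives `δ P(max_{i ≤ n} |F_i| ≥ δ) ≤ E|F_τ| ≤ 2 E F_n⁺`. Right-continuity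
transfers this to dyadic grids and then to `[0, T]`, so that
`δ P(sup_{[0,T]} |Z - 1| > δ) ≤ 2 E (1 - Z_T)⁺`. Finally `E (1 - Z^k_T)⁺ → 0` by bounded
convergence, because `0 ≤ (1 - Z^k_T)⁺ ≤ 1` and `Z^k_T → 1` in probability. -/

lemma abs_eq_two_mul_posPart_sub (a : ℝ) : |a| = 2 * a⁺ - a := by
  have := abs_add_eq_two_nsmul_posPart a
  rw [nsmul_eq_mul, Nat.cast_ofNat] at this
  linarith

-- `0 ≤ c` is needed: `⨆` in `ℝ` is `0` when it is empty or unbounded.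
lemma Real.exists_mem_lt_of_lt_biSup {ι : Type*} {s : Set ι} {f : ι → ℝ} {c : ℝ} (hc : 0 ≤ c)
    (h : c < ⨆ i ∈ s, f i) : ∃ i ∈ s, c < f i := by
  by_contra! hle
  exact h.not_ge <| Real.iSup_le (fun i => Real.iSup_le (hle i) hc) hc

noncomputable def dyadicGrid (r : ℝ) (m j : ℕ) : ℝ := min ((j : ℝ) / 2 ^ m) r

lemma dyadicGrid_mono (r : ℝ) (m : ℕ) : Monotone (dyadicGrid r m) := fun i j hij =>
  min_le_min_right r (by gcongr)

lemma dyadicGrid_zero {r : ℝ} (hr : 0 ≤ r) (m : ℕ) : dyadicGrid r m 0 = 0 := by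
  simp [dyadicGrid, hr]

lemma dyadicGrid_of_le {r : ℝ} {m j : ℕ} (hj : r * 2 ^ m ≤ j) : dyadicGrid r m j = r :=
  min_eq_right <| (le_div_iff₀ (by positivity)).2 hj

lemma dyadicGrid_min_ceil (r : ℝ) (m j : ℕ) :
    dyadicGrid r m (min j ⌈r * 2 ^ m⌉₊) = dyadicGrid r m j := by
  rcases le_total j ⌈r * 2 ^ m⌉₊ with h | h
  · rw [min_eq_left h]
  · rw [min_eq_right h, dyadicGrid_of_le (Nat.le_ceil _),
      dyadicGrid_of_le ((Nat.le_ceil _).trans (by exact_mod_cast h))]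

lemma dyadicGrid_succ_two_mul (r : ℝ) (m j : ℕ) :
    dyadicGrid r (m + 1) (2 * j) = dyadicGrid r m j := by
  simp only [dyadicGrid, pow_succ]
  congr 1
  push_cast
  field_simp

lemma tendsto_dyadicGrid_ceil {r t : ℝ} (ht : t ∈ Icc 0 r) :
    Tendsto (fun m => dyadicGrid r m ⌈t * 2 ^ m⌉₊) atTop (𝓝[≥] t) := by
  have hlow : ∀ m : ℕ, t ≤ (⌈t * 2 ^ m⌉₊ : ℝ) / 2 ^ m := fun m =>
    (le_div_iff₀ (by positivity)).2 (Nat.le_ceil _)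
  have hup : ∀ m : ℕ, (⌈t * 2 ^ m⌉₊ : ℝ) / 2 ^ m ≤ t + 1 / 2 ^ m := fun m => by
    rw [div_le_iff₀ (by positivity), add_mul, one_div_mul_cancel (by positivity)]
    exact (Nat.ceil_lt_add_one (by have := ht.1; positivity)).le
  have hlim : Tendsto (fun m : ℕ => t + 1 / 2 ^ m) atTop (𝓝 t) := by
    simpa using tendsto_const_nhds.add
      (tendsto_pow_atTop_nhds_zero_of_lt_one (by norm_num : (0 : ℝ) ≤ 1 / 2) (by norm_num))
  have hceil := tendsto_of_tendsto_of_tendsto_of_le_of_le tendsto_const_nhds hlim hlow hup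
  refine tendsto_nhdsWithin_iff.2 ⟨?_, Eventually.of_forall fun m => le_min (hlow m) ht.2⟩
  simpa [dyadicGrid, min_eq_left ht.2] using hceil.min (tendsto_const_nhds (x := r))

lemma RightCont.stopped {Ω : Type*} {X : ℝ → Ω → ℝ} (hX : RightCont X) (T : Ω → ℝ) :
    RightCont (fun t ω => X (min t (T ω)) ω) := fun ω _ =>
  (hX ω _).comp (continuous_id.min continuous_const).continuousWithinAt
    fun _ hs => min_le_min_right _ (mem_Ici.1 hs)

lemma RightCont.const_sub {Ω : Type*} {X : ℝ → Ω → ℝ} (hX : RightCont X) (c : ℝ) :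
    RightCont (fun t ω => c - X t ω) := fun ω t => continuousWithinAt_const.sub (hX ω t)

namespace MeasureTheory

variable {Ω : Type*} {m0 : MeasurableSpace Ω} {μ : Measure Ω}

def Filtration.reindex {ι κ : Type*} [Preorder ι] [Preorder κ] (ℱ : Filtration ι m0)
    {τ : κ → ι} (hτ : Monotone τ) : Filtration κ m0 where
  seq i := ℱ (τ i)
  mono' _ _ hij := ℱ.mono (hτ hij)
  le' _ := ℱ.le _

lemma Submartingale.reindex {ι κ : Type*} [Preorder ι] [Preorder κ] {ℱ : Filtration ι m0}
    {F : ι → Ω → ℝ} (hF : Submartingale F ℱ μ) {τ : κ → ι} (hτ : Monotone τ) :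
    Submartingale (fun i => F (τ i)) (ℱ.reindex hτ) μ :=
  ⟨fun i => hF.stronglyAdapted (τ i), fun _ _ hij => hF.2.1 _ _ (hτ hij), fun _ => hF.integrable _⟩

lemma mul_measureReal_iUnion_le_of_tendsto [IsFiniteMeasure μ] {S : ℕ → Set Ω}
    (hS : Monotone S) {a : ℕ → ℝ} {c δ : ℝ} (ha : Tendsto a atTop (𝓝 c))
    (h : ∀ n, δ * μ.real (S n) ≤ a n) : δ * μ.real (⋃ n, S n) ≤ c :=
  le_of_tendsto_of_tendsto' (((ENNReal.tendsto_toReal (measure_ne_top μ _)).comp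
    (tendsto_measure_iUnion_atTop hS)).const_mul δ) ha h

theorem TendstoInMeasure.tendsto_integral_of_norm_le [IsFiniteMeasure μ] {f : ℕ → Ω → ℝ}
    {g : Ω → ℝ} (hfg : TendstoInMeasure μ f atTop g) (hf : ∀ n, AEStronglyMeasurable (f n) μ)
    {C : ℝ} (hC : ∀ n, ∀ᵐ ω ∂μ, ‖f n ω‖ ≤ C) :
    Tendsto (fun n => ∫ ω, f n ω ∂μ) atTop (𝓝 (∫ ω, g ω ∂μ)) := by
  refine tendsto_of_subseq_tendsto fun ns hns => ?_
  obtain ⟨ms, -, hae⟩ := TendstoInMeasure.exists_seq_tendsto_ae fun ε hε => (hfg ε hε).comp hns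
  exact ⟨ms, tendsto_integral_of_dominated_convergence (fun _ => C) (fun n => hf _)
    (integrable_const C) (fun n => hC _) hae⟩

theorem Submartingale.maximal_ineq_abs [IsFiniteMeasure μ] {𝒢 : Filtration ℕ m0}
    {F : ℕ → Ω → ℝ} (hF : Submartingale F 𝒢 μ) (hF0 : 0 ≤ᵐ[μ] F 0) (δ : ℝ) (n : ℕ) :
    δ * μ.real {ω | ∃ i ≤ n, δ ≤ |F i ω|} ≤ 2 * ∫ ω, (F n ω)⁺ ∂μ := by
  set s : Set ℝ := {y | δ ≤ |y|}
  set E := {ω | ∃ i ≤ n, δ ≤ |F i ω|}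
  have hs : MeasurableSet s := measurableSet_le measurable_const measurable_abs
  have hE : MeasurableSet E := by
    have : E = ⋃ i ∈ Finset.range (n + 1), F i ⁻¹' s := by
      ext ω; simp [E, s]
    rw [this]
    exact Finset.measurableSet_biUnion _ fun i _ =>
      (hF.stronglyMeasurable i).measurable.le (𝒢.le i) hs
  set τ : Ω → ℕ∞ := fun ω => ((hittingBtwn F s 0 n ω : ℕ) : ℕ∞)
  have hτ : IsStoppingTime 𝒢 τ := hF.stronglyAdapted.adapted.isStoppingTime_hittingBtwn hs
  have hτn : ∀ ω, τ ω ≤ n := fun ω => ENat.natCast_le_natCast.mpr (hittingBtwn_le ω)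
  set G := stoppedValue F τ
  have hGE : ∀ ω ∈ E, δ ≤ |G ω| := fun ω ⟨i, hin, hi⟩ =>
    stoppedValue_hittingBtwn_mem (s := s) ⟨i, ⟨Nat.zero_le i, hin⟩, hi⟩
  have hGint : Integrable G μ := hF.integrable_stoppedValue hτ hτn
  have hGpos_int : Integrable (fun ω => (G ω)⁺) μ := hF.pos.integrable_stoppedValue hτ hτn
  have hG_nonneg : 0 ≤ ∫ ω, G ω ∂μ :=
    (integral_nonneg_of_ae hF0).trans
      (hF.expected_stoppedValue_mono (isStoppingTime_const 𝒢 0) hτ (fun _ => zero_le) hτn)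
  have hGpos_le : ∫ ω, (G ω)⁺ ∂μ ≤ ∫ ω, (F n ω)⁺ ∂μ :=
    hF.pos.expected_stoppedValue_mono hτ (isStoppingTime_const 𝒢 n) hτn (fun _ => le_rfl)
  have hpt : E.indicator (fun _ => δ) ≤ fun ω => 2 * (G ω)⁺ - G ω := by
    intro ω
    by_cases hω : ω ∈ E
    · simpa [hω, abs_eq_two_mul_posPart_sub] using hGE ω hω
    · simp [hω, ← abs_eq_two_mul_posPart_sub]
  have := integral_mono (g := fun ω => 2 * (G ω)⁺ - G ω) ((integrable_const δ).indicator hE)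
    ((hGpos_int.const_mul 2).sub hGint) hpt
  rw [integral_indicator_const _ hE, integral_sub (hGpos_int.const_mul 2) hGint,
    integral_const_mul, smul_eq_mul, mul_comm] at this
  linarith

theorem Submartingale.maximal_ineq_abs_of_rightCont [IsFiniteMeasure μ] {ℱ : Filtration ℝ m0}
    {F : ℝ → Ω → ℝ} (hF : Submartingale F ℱ μ) (hrc : RightCont F) (hF0 : 0 ≤ᵐ[μ] F 0)
    {δ : ℝ} (hδ : 0 ≤ δ) {r : ℝ} (hr : 0 ≤ r) :
    δ * μ.real {ω | ∃ t ∈ Icc 0 r, δ < |F t ω|} ≤ 2 * ∫ ω, (F r ω)⁺ ∂μ := by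
  set S : ℕ → Set Ω := fun m => {ω | ∃ j, δ ≤ |F (dyadicGrid r m j) ω|}
  have hS : Monotone S := monotone_nat_of_le_succ fun m ω ⟨j, hj⟩ =>
    ⟨2 * j, by rwa [dyadicGrid_succ_two_mul]⟩
  have hcover : {ω | ∃ t ∈ Icc 0 r, δ < |F t ω|} ⊆ ⋃ m, S m := by
    rintro ω ⟨t, ht, hδt⟩
    have hev := ((hrc ω t).tendsto.comp (tendsto_dyadicGrid_ceil ht)).abs.eventually
      (lt_mem_nhds hδt)
    obtain ⟨m, hm⟩ := hev.exists
    exact mem_iUnion.2 ⟨m, _, hm.le⟩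
  have hbound : ∀ m, δ * μ.real (S m) ≤ 2 * ∫ ω, (F r ω)⁺ ∂μ := fun m => by
    set N := ⌈r * 2 ^ m⌉₊
    have hSN : S m ⊆ {ω | ∃ j ≤ N, δ ≤ |F (dyadicGrid r m j) ω|} := fun ω ⟨j, hj⟩ =>
      ⟨min j N, min_le_right _ _, by rwa [dyadicGrid_min_ceil]⟩
    have hdisc := (hF.reindex (dyadicGrid_mono r m)).maximal_ineq_abs
      (by simpa [dyadicGrid_zero hr] using hF0) δ N
    rw [dyadicGrid_of_le (Nat.le_ceil _)] at hdisc
    exact (mul_le_mul_of_nonneg_left (measureReal_mono hSN) hδ).trans hdisc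
  exact (mul_le_mul_of_nonneg_left (measureReal_mono hcover) hδ).trans
    (mul_measureReal_iUnion_le_of_tendsto hS tendsto_const_nhds hbound)

lemma eventually_apply_natCast_eq {F : ℝ → Ω → ℝ} {T : Ω → ℝ}
    (hFT : ∀ ω t, T ω ≤ t → F t ω = F (T ω) ω) (ω : Ω) :
    ∀ᶠ N : ℕ in atTop, F N ω = F (T ω) ω :=
  (tendsto_natCast_atTop_atTop.eventually_ge_atTop (T ω)).mono fun N hN => hFT ω N hN

theorem Submartingale.maximal_ineq_abs_of_stopped [IsFiniteMeasure μ] {ℱ : Filtration ℝ m0}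
    {F : ℝ → Ω → ℝ} (hF : Submartingale F ℱ μ) (hrc : RightCont F) (hF0 : 0 ≤ᵐ[μ] F 0)
    (hF1 : ∀ t ω, F t ω ≤ 1) {T : Ω → ℝ} (hFT : ∀ ω t, T ω ≤ t → F t ω = F (T ω) ω)
    {δ : ℝ} (hδ : 0 ≤ δ) :
    δ * μ.real {ω | ∃ t ∈ Ici 0, δ < |F t ω|} ≤ 2 * ∫ ω, (F (T ω) ω)⁺ ∂μ := by
  set S : ℕ → Set Ω := fun N => {ω | ∃ t ∈ Icc 0 (N : ℝ), δ < |F t ω|}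
  have hS : Monotone S := fun a b hab ω ⟨t, ht, h⟩ =>
    ⟨t, ⟨ht.1, ht.2.trans (by exact_mod_cast hab)⟩, h⟩
  have hcover : {ω | ∃ t ∈ Ici 0, δ < |F t ω|} ⊆ ⋃ N, S N := fun ω ⟨t, ht, h⟩ =>
    mem_iUnion.2 ⟨⌈t⌉₊, t, ⟨ht, Nat.le_ceil t⟩, h⟩
  have hlim : Tendsto (fun N : ℕ => ∫ ω, (F N ω)⁺ ∂μ) atTop (𝓝 (∫ ω, (F (T ω) ω)⁺ ∂μ)) :=
    tendsto_integral_of_dominated_convergence (fun _ => 1)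
      (fun N => (hF.pos.integrable N).aestronglyMeasurable) (integrable_const 1)
      (fun N => ae_of_all _ fun ω => by
        rw [Real.norm_of_nonneg (posPart_nonneg _)]
        exact sup_le (hF1 _ _) zero_le_one)
      (ae_of_all _ fun ω => tendsto_const_nhds.congr'
        ((eventually_apply_natCast_eq hFT ω).mono fun N hN => by simp only [hN]))
  exact (mul_le_mul_of_nonneg_left (measureReal_mono hcover) hδ).trans
    (mul_measureReal_iUnion_le_of_tendsto hS (hlim.const_mul 2)
      fun N => hF.maximal_ineq_abs_of_rightCont hrc hF0 hδ N.cast_nonneg)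

theorem TendstoInMeasure.of_dist_le {ι E : Type*} [PseudoMetricSpace E] {l : Filter ι}
    {f f' : ι → Ω → E} {g g' : Ω → E} (hfg : TendstoInMeasure μ f l g)
    (hle : ∀ i ω, dist (f' i ω) (g' ω) ≤ dist (f i ω) (g ω)) : TendstoInMeasure μ f' l g' := by
  rw [tendstoInMeasure_iff_dist] at hfg ⊢
  exact fun ε hε => tendsto_of_tendsto_of_tendsto_of_le_of_le tendsto_const_nhds (hfg ε hε)
    (fun _ => zero_le) fun i => measure_mono fun ω hω => hω.trans (hle i ω)

lemma tendsto_integral_posPart_one_sub [IsFiniteMeasure μ] {W : ℕ → Ω → ℝ}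
    (hW : ∀ k, AEStronglyMeasurable (W k) μ) (hW0 : ∀ k ω, 0 ≤ W k ω)
    (hW1 : TendstoInMeasure μ W atTop fun _ => 1) :
    Tendsto (fun k => ∫ ω, (1 - W k ω)⁺ ∂μ) atTop (𝓝 0) := by
  have hconv : TendstoInMeasure μ (fun k ω => (1 - W k ω)⁺) atTop 0 :=
    hW1.of_dist_le fun k ω => by
      rw [Pi.zero_apply, dist_zero_right, Real.norm_of_nonneg (posPart_nonneg _), Real.dist_eq,
        abs_sub_comm]
      exact sup_le (le_abs_self _) (abs_nonneg _)
  simpa using hconv.tendsto_integral_of_norm_le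
    (fun k => (aestronglyMeasurable_const.sub (hW k)).sup aestronglyMeasurable_const) (C := 1)
    fun k => ae_of_all _ fun ω => by
      rw [Real.norm_of_nonneg (posPart_nonneg _)]
      exact sup_le (sub_le_self _ (hW0 k ω)) zero_le_one

lemma aestronglyMeasurable_apply_of_eq_of_le {X : ℝ → Ω → ℝ} {T : Ω → ℝ}
    (hX : ∀ t, AEStronglyMeasurable (X t) μ) (hXT : ∀ ω t, T ω ≤ t → X t ω = X (T ω) ω) :
    AEStronglyMeasurable (fun ω => X (T ω) ω) μ :=
  aestronglyMeasurable_of_tendsto_ae atTop (fun N : ℕ => hX N)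
    (ae_of_all _ fun ω => tendsto_const_nhds.congr'
      ((eventually_apply_natCast_eq hXT ω).mono fun _ hN => hN.symm))

theorem Supermartingale.maximal_ineq_abs_sub_one_of_stopped [IsFiniteMeasure μ]
    {ℱ : Filtration ℝ m0} {Z : ℝ → Ω → ℝ} {T : Ω → ℝ}
    (hZ : Supermartingale (fun t ω => Z (min t (T ω)) ω) ℱ μ) (hrc : RightCont Z)
    (hnn : ∀ t ω, 0 ≤ Z t ω) (h0 : ∀ ω, Z 0 ω = 1) (hT0 : ∀ ω, 0 ≤ T ω) {δ : ℝ} (hδ : 0 ≤ δ) :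
    δ * μ.real {ω | ∃ t ∈ Icc 0 (T ω), δ < |Z t ω - 1|} ≤ 2 * ∫ ω, (1 - Z (T ω) ω)⁺ ∂μ := by
  set F : ℝ → Ω → ℝ := fun t ω => 1 - Z (min t (T ω)) ω
  have hF : Submartingale F ℱ μ := (martingale_const ℱ μ 1).submartingale.sub_supermartingale hZ
  have hsub : {ω | ∃ t ∈ Icc 0 (T ω), δ < |Z t ω - 1|} ⊆ {ω | ∃ t ∈ Ici 0, δ < |F t ω|} :=
    fun ω ⟨t, ht, h⟩ => ⟨t, ht.1, by rwa [abs_sub_comm, ← min_eq_left ht.2] at h⟩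
  have hmax := hF.maximal_ineq_abs_of_stopped ((hrc.stopped T).const_sub 1)
    (ae_of_all _ fun ω => by simp [F, min_eq_left (hT0 ω), h0])
    (fun t ω => sub_le_self _ (hnn _ ω)) (T := T)
    (fun ω t ht => by simp only [F, min_eq_right ht, min_self]) hδ
  simp only [F, min_self] at hmax
  exact (mul_le_mul_of_nonneg_left (measureReal_mono hsub) hδ).trans hmax

end MeasureTheory

theorem statement0_general
    {Ω : Type*} {m0 : MeasurableSpace Ω} {μ : Measure Ω} [IsProbabilityMeasure μ]
    (ℱ : Filtration ℝ m0) (T : Ω → ℝ) (hT0 : ∀ ω, 0 ≤ T ω)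
    (Z : ℕ → ℝ → Ω → ℝ)
    (hrc : ∀ k, RightCont (Z k))
    (hnn : ∀ k t ω, 0 ≤ Z k t ω)
    (h0 : ∀ k ω, Z k 0 ω = 1)
    (hsuper : ∀ k, Supermartingale (fun t ω => Z k (min t (T ω)) ω) ℱ μ)
    (hZT : TendstoInMeasure μ (fun k ω => Z k (T ω) ω) atTop (fun _ => (1 : ℝ))) :
    TendstoInMeasure μ (fun k ω => ⨆ t ∈ Icc (0 : ℝ) (T ω), |Z k t ω - 1|) atTop
      (fun _ => (0 : ℝ)) := by
  have hmeas : ∀ k, AEStronglyMeasurable (fun ω => Z k (T ω) ω) μ := fun k => by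
    simpa using aestronglyMeasurable_apply_of_eq_of_le (T := T)
      (fun t => ((hsuper k).integrable t).1) fun ω t ht => by simp only [min_eq_right ht, min_self]
  have hlim := tendsto_integral_posPart_one_sub hmeas (fun k ω => hnn k _ ω) hZT
  rw [tendstoInMeasure_iff_measureReal_dist]
  intro ε hε
  have hsub : ∀ k, {ω | ε ≤ dist (⨆ t ∈ Icc (0 : ℝ) (T ω), |Z k t ω - 1|) 0} ⊆
      {ω | ∃ t ∈ Icc 0 (T ω), ε / 2 < |Z k t ω - 1|} := fun k ω hω => by
    have hsup_nonneg : 0 ≤ ⨆ t ∈ Icc (0 : ℝ) (T ω), |Z k t ω - 1| :=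
      Real.iSup_nonneg fun t => Real.iSup_nonneg fun _ => abs_nonneg _
    rw [mem_ofPred_eq, Real.dist_0_eq_abs, abs_of_nonneg hsup_nonneg] at hω
    exact Real.exists_mem_lt_of_lt_biSup (by positivity) ((half_lt_self hε).trans_le hω)
  have hbound : ∀ k, μ.real {ω | ε ≤ dist (⨆ t ∈ Icc (0 : ℝ) (T ω), |Z k t ω - 1|) 0}
      ≤ (2 * ∫ ω, (1 - Z k (T ω) ω)⁺ ∂μ) / (ε / 2) := fun k =>
    (measureReal_mono (hsub k)).trans <| (le_div_iff₀' (half_pos hε)).2 <|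
      (hsuper k).maximal_ineq_abs_sub_one_of_stopped (hrc k) (hnn k) (h0 k) hT0 (half_pos hε).le
  refine squeeze_zero (fun _ => measureReal_nonneg) hbound ?_
  simpa using (hlim.const_mul 2).div_const (ε / 2)

/-- A sequence of nonnegative càdlàg supermartingales on `[0,T]` starting at `1`
whose terminal values tend to `1` in probability converges to `1` uniformly on `[0,T]`
in probability. -/
theorem statement0
    {Ω : Type*} {m0 : MeasurableSpace Ω} {μ : Measure Ω} [IsProbabilityMeasure μ]
    (ℱ : Filtration ℝ m0) (T : Ω → ℝ) (hT : IsStoppingTime ℱ (fun ω => (T ω : WithTop ℝ))) (hT0 : ∀ ω, 0 ≤ T ω)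
    (Z : ℕ → ℝ → Ω → ℝ)
    (hrc : ∀ k, RightCont (Z k))
    (hll : ∀ k, ∃ Zm, HasLeftLimits (Z k) Zm)
    (hnn : ∀ k t ω, 0 ≤ Z k t ω)
    (h0 : ∀ k ω, Z k 0 ω = 1)
    (hsuper : ∀ k, Supermartingale (fun t ω => Z k (min t (T ω)) ω) ℱ μ)
    (hZT : TendstoInMeasure μ (fun k ω => Z k (T ω) ω) atTop (fun _ => (1 : ℝ))) :
    TendstoInMeasure μ (fun k ω => ⨆ t ∈ Icc (0 : ℝ) (T ω), |Z k t ω - 1|) atTop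
      (fun _ => (0 : ℝ)) :=
  statement0_general ℱ T hT0 Z hrc hnn h0 hsuper hZT
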